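/- Repeated starvation bound implies bounded-time completion: in a fair leader system, for every epoch e0, pending (e0 + pending e0 * fairness_bound) = 0; that is, all requests pending at epoch e0 are processed within pending(e0) · fairness_bound epochs. -/
import Mathlib

theorem bounded_time_completion {N : Type*}
    (leader_at : ℕ → N) (is_honest : N → Bool)
    (pending : ℕ → ℕ) (fairness_bound : ℕ)
    (fairness_bound_positive : fairness_bound > 0)
    (fair_leader : ∀ epoch, ∃ e, epoch ≤ e ∧ e < epoch + fairness_bound ∧
      is_honest (leader_at e) = true)
    (honest_progress : ∀ e, is_honest (leader_at e) = true → pending e > 0 →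
      pending (e + 1) < pending e)
    (non_honest_bounded : ∀ e, pending (e + 1) ≤ pending e)
    (e0 : ℕ) :
    pending (e0 + pending e0 * fairness_bound) = 0 := by
  have mono : ∀ a b, a ≤ b → pending b ≤ pending a := by
    intro a b hab
    induction b with
    | zero => simp_all
    | succ b ih =>
      rcases Nat.lt_or_ge a (b+1) with h | h
      · exact le_trans (non_honest_bounded b) (ih (Nat.lt_succ_iff.mp h))
      · have : a = b + 1 := le_antisymm hab h
        simp [this]
  have step : ∀ e, pending e > 0 → pending (e + fairness_bound) < pending e := by
    intro e hpos
    obtain ⟨h, h1, h2, h3⟩ := fair_leader e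
    rcases Nat.eq_zero_or_pos (pending h) with hz | hp
    · have := mono h (e + fairness_bound) (le_of_lt h2)
      omega
    · have hlt := honest_progress h h3 hp
      have h4 : h + 1 ≤ e + fairness_bound := h2
      have := mono (h+1) (e + fairness_bound) h4
      have := mono e h h1
      omega
  have key : ∀ k e, pending e ≤ k → pending (e + k * fairness_bound) = 0 := by
    intro k
    induction k with
    | zero => intro e he; simpa using Nat.le_zero.mp he
    | succ k ih =>
      intro e he
      rcases Nat.eq_zero_or_pos (pending e) with hz | hp
      · have := mono e (e + (k+1) * fairness_bound) (Nat.le_add_right _ _)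
        omega
      · have hs := step e hp
        have : pending (e + fairness_bound) ≤ k := by omega
        have := ih (e + fairness_bound) this
        have heq : e + fairness_bound + k * fairness_bound = e + (k+1) * fairness_bound := by ring
        rwa [heq] at this
  exact key (pending e0) e0 le_rfl
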